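/- If the jump kernel J is constant on each product B_i^k × B_j^k (i ≠ j) of balls of radius φ(k), then for any v ∈ D_0 (a finite linear combination of indicators of closed balls) and any function w on S that is constant on each ball B_i^k, the jump Dirichlet form satisfies 𝓔(w, v) = 𝓔(w, E^k Π^k v), where E^k Π^k v is the ball-wise average of v over the radius-φ(k) balls. -/

import Mathlib

/-!
On a block `B i ×ˢ B j` of the partition of `S × S`, the weight `(w x - w y) * J x y` is constant:
it vanishes when `i = j` because `w` is constant on balls, and equals `(w_i - w_j) * C i j`
otherwise. The block integral of `v x - v y` only sees `∫_{B i} v` and `∫_{B j} v`, which do not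
change when `v` is replaced by its ball-wise average; summing over the countably many blocks
gives the identity.
-/

open MeasureTheory Set Function

section Blocks

variable {α β : Type*} [MeasurableSpace α] [MeasurableSpace β] {μ : Measure α} {ν : Measure β}
  {s : Set α} {t : Set β}

theorem setIntegral_eq_of_eqOn_setAverage (hs : MeasurableSet s) (hμs : μ s ≠ ⊤)
    {f F : α → ℝ} (hF : EqOn F (fun _ ↦ ⨍ x in s, f x ∂μ) s) :
    ∫ x in s, F x ∂μ = ∫ x in s, f x ∂μ := by
  rw [setIntegral_congr_fun hs hF, setIntegral_const, measure_smul_setAverage f hμs]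

variable [SFinite μ] [SFinite ν]

theorem setIntegral_prod_sub (hμs : μ s ≠ ⊤) (hνt : ν t ≠ ⊤) {f : α → ℝ} {g : β → ℝ}
    (hf : IntegrableOn f s μ) (hg : IntegrableOn g t ν) :
    ∫ p in s ×ˢ t, (f p.1 - g p.2) ∂μ.prod ν
      = ν.real t * ∫ x in s, f x ∂μ - μ.real s * ∫ y in t, g y ∂ν := by
  have : IsFiniteMeasure (μ.restrict s) := isFiniteMeasure_restrict.2 hμs
  have : IsFiniteMeasure (ν.restrict t) := isFiniteMeasure_restrict.2 hνt
  rw [← Measure.prod_restrict, integral_sub (hf.comp_fst _) (hg.comp_snd _), integral_fun_fst,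
    integral_fun_snd, measureReal_restrict_apply_univ, measureReal_restrict_apply_univ,
    smul_eq_mul, smul_eq_mul]

theorem setIntegral_prod_sub_eq_of_eqOn_setAverage (hs : MeasurableSet s) (ht : MeasurableSet t)
    (hμs : μ s ≠ ⊤) (hνt : ν t ≠ ⊤) {f F : α → ℝ} {g G : β → ℝ}
    (hf : IntegrableOn f s μ) (hg : IntegrableOn g t ν)
    (hF : EqOn F (fun _ ↦ ⨍ x in s, f x ∂μ) s) (hG : EqOn G (fun _ ↦ ⨍ y in t, g y ∂ν) t) :
    ∫ p in s ×ˢ t, (f p.1 - g p.2) ∂μ.prod ν = ∫ p in s ×ˢ t, (F p.1 - G p.2) ∂μ.prod ν := by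
  rw [setIntegral_prod_sub hμs hνt hf hg,
    setIntegral_prod_sub hμs hνt ((integrableOn_const hμs).congr_fun hF.symm hs)
      ((integrableOn_const hνt).congr_fun hG.symm ht),
    setIntegral_eq_of_eqOn_setAverage hs hμs hF, setIntegral_eq_of_eqOn_setAverage ht hνt hG]

theorem setIntegral_mul_prod_sub_eq_of_eqOn_setAverage (hs : MeasurableSet s)
    (ht : MeasurableSet t) (hμs : μ s ≠ ⊤) (hνt : ν t ≠ ⊤) {k : α × β → ℝ}
    (hk : ∀ p ∈ s ×ˢ t, ∀ q ∈ s ×ˢ t, k p = k q) {f F : α → ℝ} {g G : β → ℝ}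
    (hf : IntegrableOn f s μ) (hg : IntegrableOn g t ν)
    (hF : EqOn F (fun _ ↦ ⨍ x in s, f x ∂μ) s) (hG : EqOn G (fun _ ↦ ⨍ y in t, g y ∂ν) t) :
    ∫ p in s ×ˢ t, k p * (f p.1 - g p.2) ∂μ.prod ν
      = ∫ p in s ×ˢ t, k p * (F p.1 - G p.2) ∂μ.prod ν := by
  obtain hst | ⟨p₀, hp₀⟩ := (s ×ˢ t).eq_empty_or_nonempty
  · simp [hst]
  have hk₀ : EqOn k (fun _ ↦ k p₀) (s ×ˢ t) := fun p hp ↦ hk p hp p₀ hp₀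
  rw [setIntegral_congr_fun (hs.prod ht) (fun p hp ↦ congrArg (· * (f p.1 - g p.2)) (hk₀ hp)),
    setIntegral_congr_fun (hs.prod ht) (fun p hp ↦ congrArg (· * (F p.1 - G p.2)) (hk₀ hp)),
    integral_const_mul, integral_const_mul,
    setIntegral_prod_sub_eq_of_eqOn_setAverage hs ht hμs hνt hf hg hF hG]

end Blocks

theorem integral_mul_prod_sub_eq_of_eqOn_setAverage {α ι : Type*} [MeasurableSpace α]
    {μ : Measure α} [Countable ι] {B : ι → Set α} (hBm : ∀ i, MeasurableSet (B i))
    (hBd : Pairwise (Disjoint on B)) (hBu : ⋃ i, B i = univ) (hBμ : ∀ i, μ (B i) ≠ ⊤)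
    {k : α × α → ℝ} (hk : ∀ i j, ∀ p ∈ B i ×ˢ B j, ∀ q ∈ B i ×ˢ B j, k p = k q) {f F : α → ℝ}
    (hf : ∀ i, IntegrableOn f (B i) μ) (hF : ∀ i, EqOn F (fun _ ↦ ⨍ x in B i, f x ∂μ) (B i))
    (hfi : Integrable (fun p ↦ k p * (f p.1 - f p.2)) (μ.prod μ))
    (hFi : Integrable (fun p ↦ k p * (F p.1 - F p.2)) (μ.prod μ)) :
    ∫ p, k p * (f p.1 - f p.2) ∂μ.prod μ = ∫ p, k p * (F p.1 - F p.2) ∂μ.prod μ := by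
  have : SigmaFinite μ := Measure.sigmaFinite_of_countable (countable_range B)
    (forall_mem_range.2 fun i ↦ (hBμ i).lt_top) (by rwa [sUnion_range])
  have hTm : ∀ ij : ι × ι, MeasurableSet (B ij.1 ×ˢ B ij.2) := fun ij ↦ (hBm _).prod (hBm _)
  have hTd := PairwiseDisjoint.prod (s := univ) (t := univ) (pairwise_univ.2 hBd)
    (pairwise_univ.2 hBd)
  rw [univ_prod_univ, PairwiseDisjoint, pairwise_univ] at hTd
  have hTu : ⋃ ij : ι × ι, B ij.1 ×ˢ B ij.2 = univ := by rw [iUnion_prod, hBu, univ_prod_univ]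
  rw [← setIntegral_univ, ← setIntegral_univ (f := fun p ↦ k p * (F p.1 - F p.2)), ← hTu,
    integral_iUnion hTm hTd hfi.integrableOn, integral_iUnion hTm hTd hFi.integrableOn]
  exact tsum_congr fun ⟨i, j⟩ ↦ setIntegral_mul_prod_sub_eq_of_eqOn_setAverage (hBm i) (hBm j)
    (hBμ i) (hBμ j) (hk i j) (hf i) (hf j) (hF i) (hF j)

theorem integrableOn_sum_mul_indicator_one {α κ : Type*} [MeasurableSpace α] {μ : Measure α}
    [Fintype κ] {s : κ → Set α} (hs : ∀ l, MeasurableSet (s l)) (a : κ → ℝ) {t : Set α}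
    (ht : μ t ≠ ⊤) : IntegrableOn (fun x ↦ ∑ l, a l * (s l).indicator (fun _ ↦ (1 : ℝ)) x) t μ :=
  integrable_finsetSum _ fun l _ ↦
    ((integrableOn_const (C := (1 : ℝ)) ht).indicator (hs l)).const_mul (a l)

theorem dirichlet_form_ballwise_constant_projection_general
    {S : Type*} [MetricSpace S] [MeasurableSpace S] [BorelSpace S] (μ : Measure S)
    {ι : Type*} [Countable ι]
    (c : ι → S) (R : ℝ)
    (B : ι → Set S) (hB : ∀ i, B i = Metric.closedBall (c i) R)
    (hBd : Pairwise (Function.onFun Disjoint B))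
    (hBu : (⋃ i, B i) = Set.univ)
    (hBμ : ∀ i, 0 < μ (B i) ∧ μ (B i) < ⊤)
    (J : S → S → ℝ)
    (C : ι → ι → ℝ)
    (hJconst : ∀ i j, i ≠ j → ∀ x ∈ B i, ∀ y ∈ B j, J x y = C i j)
    -- v ∈ D₀ : finite linear combination of indicators of closed balls
    (v : S → ℝ)
    (hv : ∃ (n : ℕ) (a : Fin n → S) (ρs : Fin n → ℝ) (coef : Fin n → ℝ),
      (∀ l, 0 < ρs l) ∧
      v = fun x => ∑ l, coef l *
        (Metric.closedBall (a l) (ρs l)).indicator (fun _ => (1 : ℝ)) x)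
    -- w constant on each ball B i
    (w : S → ℝ) (hw : ∀ i, ∀ x ∈ B i, ∀ x' ∈ B i, w x = w x')
    -- ball-wise average of v
    (Av : S → ℝ)
    (hAv : ∀ i, ∀ x ∈ B i, Av x = (μ (B i)).toReal⁻¹ * ∫ y in B i, v y ∂μ)
    -- convergence of the relevant integrals
    (hint1 : Integrable (fun p : S × S =>
      (w p.1 - w p.2) * (v p.1 - v p.2) * J p.1 p.2) (μ.prod μ))
    (hint2 : Integrable (fun p : S × S =>
      (w p.1 - w p.2) * (Av p.1 - Av p.2) * J p.1 p.2) (μ.prod μ)) :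
    (1 / 2) * ∫ p : S × S, (w p.1 - w p.2) * (v p.1 - v p.2) * J p.1 p.2 ∂(μ.prod μ)
      = (1 / 2) * ∫ p : S × S,
          (w p.1 - w p.2) * (Av p.1 - Av p.2) * J p.1 p.2 ∂(μ.prod μ) := by
  obtain ⟨n, a, ρs, coef, -, hv_eq⟩ := hv
  set k : S × S → ℝ := fun p ↦ (w p.1 - w p.2) * J p.1 p.2
  have hk : ∀ i j, ∀ p ∈ B i ×ˢ B j, ∀ q ∈ B i ×ˢ B j, k p = k q := by
    rintro i j ⟨x, y⟩ ⟨hx, hy⟩ ⟨x', y'⟩ ⟨hx', hy'⟩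
    simp only [k, hw i x hx x' hx', hw j y hy y' hy']
    obtain rfl | hij := eq_or_ne i j
    · rw [hw i x' hx' y' hy', sub_self, zero_mul, zero_mul]
    · rw [hJconst i j hij x hx y hy, hJconst i j hij x' hx' y' hy']
  have hform : ∀ u : S → ℝ, (fun p : S × S ↦ (w p.1 - w p.2) * (u p.1 - u p.2) * J p.1 p.2)
      = fun p ↦ k p * (u p.1 - u p.2) := fun u ↦ funext fun p ↦ by ring
  rw [hform v] at hint1
  rw [hform Av] at hint2
  rw [hform v, hform Av]
  congr 1
  have hBm : ∀ i, MeasurableSet (B i) := fun i ↦ hB i ▸ measurableSet_closedBall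
  refine integral_mul_prod_sub_eq_of_eqOn_setAverage hBm hBd hBu (fun i ↦ (hBμ i).2.ne) hk
    (fun i ↦ hv_eq ▸ integrableOn_sum_mul_indicator_one (fun _ ↦ measurableSet_closedBall) coef
      (hBμ i).2.ne) (fun i x hx ↦ ?_) hint1 hint2
  rw [hAv i x hx, setAverage_eq, measureReal_def, smul_eq_mul]

theorem dirichlet_form_ballwise_constant_projection
    {S : Type*} [MetricSpace S] [MeasurableSpace S] [BorelSpace S] (μ : Measure S)
    (hU : ∀ x y z : S, dist x z ≤ max (dist x y) (dist y z))
    {ι : Type*} [Countable ι]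
    (c : ι → S) (R : ℝ) (hR : 0 < R)
    (B : ι → Set S) (hB : ∀ i, B i = Metric.closedBall (c i) R)
    (hBd : Pairwise (Function.onFun Disjoint B))
    (hBu : (⋃ i, B i) = Set.univ)
    (hBμ : ∀ i, 0 < μ (B i) ∧ μ (B i) < ⊤)
    (J : S → S → ℝ)
    (hJm : Measurable (Function.uncurry J))
    (hJnn : ∀ x y, 0 ≤ J x y)
    (hJsym : ∀ x y, J x y = J y x)
    (C : ι → ι → ℝ)
    (hJconst : ∀ i j, i ≠ j → ∀ x ∈ B i, ∀ y ∈ B j, J x y = C i j)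
    -- v ∈ D₀ : finite linear combination of indicators of closed balls
    (v : S → ℝ)
    (hv : ∃ (n : ℕ) (a : Fin n → S) (ρs : Fin n → ℝ) (coef : Fin n → ℝ),
      (∀ l, 0 < ρs l) ∧
      v = fun x => ∑ l, coef l *
        (Metric.closedBall (a l) (ρs l)).indicator (fun _ => (1 : ℝ)) x)
    -- w constant on each ball B i
    (w : S → ℝ) (hw : ∀ i, ∀ x ∈ B i, ∀ x' ∈ B i, w x = w x')
    -- ball-wise average of v
    (Av : S → ℝ)
    (hAv : ∀ i, ∀ x ∈ B i, Av x = (μ (B i)).toReal⁻¹ * ∫ y in B i, v y ∂μ)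
    -- convergence of the relevant integrals
    (hint1 : Integrable (fun p : S × S =>
      (w p.1 - w p.2) * (v p.1 - v p.2) * J p.1 p.2) (μ.prod μ))
    (hint2 : Integrable (fun p : S × S =>
      (w p.1 - w p.2) * (Av p.1 - Av p.2) * J p.1 p.2) (μ.prod μ)) :
    (1 / 2) * ∫ p : S × S, (w p.1 - w p.2) * (v p.1 - v p.2) * J p.1 p.2 ∂(μ.prod μ)
      = (1 / 2) * ∫ p : S × S,
          (w p.1 - w p.2) * (Av p.1 - Av p.2) * J p.1 p.2 ∂(μ.prod μ) :=
  dirichlet_form_ballwise_constant_projection_general μ c R B hB hBd hBu hBμ J C hJconst v hv w hw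
    Av hAv hint1 hint2
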